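/- arXiv:math/0010087 — 7 statements merged into one kernel-verified Lean document; each statement's English description precedes it below -/
import Mathlib

section
/- The amoeba of a nonzero polynomial in two complex variables is a closed subset of ℝ². -/
open MeasureTheory

noncomputable def mvEval (f : MvPolynomial (Fin 2) ℂ) (z₁ z₂ : ℂ) : ℂ :=
  MvPolynomial.eval (fun i : Fin 2 => if i = 0 then z₁ else z₂) f

def torusZeroSet (f : MvPolynomial (Fin 2) ℂ) : Set (ℂ × ℂ) :=
  {z | z.1 ≠ 0 ∧ z.2 ≠ 0 ∧ mvEval f z.1 z.2 = 0}

/-- The map `Log : (z₁, z₂) ↦ (log |z₁|, log |z₂|)`. -/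
noncomputable def amoebaLog (z : ℂ × ℂ) : ℝ × ℝ :=
  (Real.log ‖z.1‖, Real.log ‖z.2‖)

noncomputable def amoeba (f : MvPolynomial (Fin 2) ℂ) : Set (ℝ × ℝ) :=
  amoebaLog '' torusZeroSet f

/-!
Writing a point of the torus in polar form `(e^{x₁} u₁, e^{x₂} u₂)` with `x ∈ ℝ²` and `u` on
the compact torus `S¹ × S¹`, `Log` becomes the projection `(x, u) ↦ x`. The amoeba is
therefore the projection of a closed subset of `ℝ² × (S¹ × S¹)` along a compact factor, and
such projections are closed maps.
-/

lemma log_norm_exp_mul_circle (x : ℝ) (u : Circle) :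
    Real.log ‖(Real.exp x : ℂ) * u‖ = x := by
  rw [norm_mul, Circle.norm_coe, mul_one, Complex.norm_real,
    Real.norm_of_nonneg (Real.exp_nonneg x), Real.log_exp]

lemma exp_mul_circle_ne_zero (x : ℝ) (u : Circle) : (Real.exp x : ℂ) * u ≠ 0 :=
  mul_ne_zero (Complex.ofReal_ne_zero.2 (Real.exp_pos x).ne') (Circle.coe_ne_zero u)

lemma exp_log_norm_mul_circle_exp_arg {z : ℂ} (hz : z ≠ 0) :
    (Real.exp (Real.log ‖z‖) : ℂ) * Circle.exp (Complex.arg z) = z := by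
  rw [Real.exp_log (norm_pos_iff.2 hz), Circle.coe_exp, Complex.norm_mul_exp_arg_mul_I]

def complexTorus : Set (ℂ × ℂ) := {z | z.1 ≠ 0 ∧ z.2 ≠ 0}

noncomputable def torusPolar (p : (ℝ × ℝ) × (Circle × Circle)) : ℂ × ℂ :=
  ((Real.exp p.1.1 : ℂ) * p.2.1, (Real.exp p.1.2 : ℂ) * p.2.2)

lemma continuous_torusPolar : Continuous torusPolar := by
  unfold torusPolar
  fun_prop

lemma amoebaLog_torusPolar (p : (ℝ × ℝ) × (Circle × Circle)) :
    amoebaLog (torusPolar p) = p.1 := by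
  simp only [amoebaLog, torusPolar, log_norm_exp_mul_circle]

lemma range_torusPolar : Set.range torusPolar = complexTorus := by
  ext z
  constructor
  · rintro ⟨p, rfl⟩
    exact ⟨exp_mul_circle_ne_zero _ _, exp_mul_circle_ne_zero _ _⟩
  · rintro ⟨h₁, h₂⟩
    exact ⟨(amoebaLog z, (Circle.exp (Complex.arg z.1), Circle.exp (Complex.arg z.2))),
      Prod.ext (exp_log_norm_mul_circle_exp_arg h₁) (exp_log_norm_mul_circle_exp_arg h₂)⟩

lemma image_amoebaLog_inter_complexTorus (Z : Set (ℂ × ℂ)) :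
    amoebaLog '' (Z ∩ complexTorus) = Prod.fst '' (torusPolar ⁻¹' Z) := by
  rw [← range_torusPolar, ← Set.image_preimage_eq_inter_range, Set.image_image]
  simp only [amoebaLog_torusPolar]

lemma isClosed_image_amoebaLog_inter_complexTorus {Z : Set (ℂ × ℂ)} (hZ : IsClosed Z) :
    IsClosed (amoebaLog '' (Z ∩ complexTorus)) := by
  rw [image_amoebaLog_inter_complexTorus]
  exact isClosedMap_fst_of_compactSpace _ (hZ.preimage continuous_torusPolar)

lemma continuous_mvEval (f : MvPolynomial (Fin 2) ℂ) :
    Continuous fun z : ℂ × ℂ => mvEval f z.1 z.2 :=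
  (MvPolynomial.continuous_eval f).comp <| continuous_pi fun i => by
    split_ifs
    exacts [continuous_fst, continuous_snd]

lemma torusZeroSet_eq_inter_complexTorus (f : MvPolynomial (Fin 2) ℂ) :
    torusZeroSet f = {z | mvEval f z.1 z.2 = 0} ∩ complexTorus := by
  ext z
  simp only [torusZeroSet, complexTorus, Set.mem_ofPred_eq, Set.mem_inter_iff]
  tauto

theorem amoeba_isClosed_general (f : MvPolynomial (Fin 2) ℂ) :
    IsClosed (amoeba f) := by
  rw [amoeba, torusZeroSet_eq_inter_complexTorus]
  exact isClosed_image_amoebaLog_inter_complexTorus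
    (isClosed_eq (continuous_mvEval f) continuous_const)

/-- The amoeba of a nonzero polynomial in two complex variables is a closed
subset of ℝ². -/
theorem amoeba_isClosed (f : MvPolynomial (Fin 2) ℂ) (hf : f ≠ 0) :
    IsClosed (amoeba f) :=
  amoeba_isClosed_general f
end

section
/- For real symmetric positive definite 2×2 matrices M₁ and M₂, equality √det(M₁ + M₂) = √det(M₁) + √det(M₂) holds if and only if M₁ and M₂ are positive real multiples of each other, i.e. there exists c > 0 with M₂ = c • M₁. -/
/-!
For `2 × 2` matrices `det (A + B) = det A + det B + tr (adj A * B)`, so the equality of square roots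
amounts to `tr (adj A * B) ^ 2 = 4 det A det B`: equality in the reverse Cauchy–Schwarz inequality
for the Lorentzian quadratic form `det` on symmetric matrices. With `D = A₀₀ • B - B₀₀ • A`, which
has `D₀₀ = 0`, the discriminant times `A₀₀ ²` is the sum of squares
`(A₀₀ D₁₁ - 2 A₀₁ D₀₁)² + 4 det A · D₀₁²`, so it vanishes only when `D = 0`.
-/

open Matrix

theorem Real.sq_eq_four_mul_of_sqrt_add_eq {x y m : ℝ} (hx : 0 ≤ x) (hy : 0 ≤ y)
    (hxym : 0 ≤ x + y + m) (h : √(x + y + m) = √x + √y) : m ^ 2 = 4 * x * y := by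
  have hsq : x + y + m = (√x + √y) ^ 2 := by rw [← h, Real.sq_sqrt hxym]
  have hm : m = 2 * √x * √y := by nlinarith [Real.sq_sqrt hx, Real.sq_sqrt hy]
  rw [hm, mul_pow, mul_pow, Real.sq_sqrt hx, Real.sq_sqrt hy]
  ring

namespace Matrix

theorem det_add_fin_two {R : Type*} [CommRing R] (A B : Matrix (Fin 2) (Fin 2) R) :
    (A + B).det = A.det + B.det + (adjugate A * B).trace := by
  simp only [det_fin_two, adjugate_fin_two, trace_fin_two, mul_apply, Fin.sum_univ_two, add_apply,
    of_apply, cons_val', cons_val_zero, cons_val_one, empty_val', cons_val_fin_one]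
  ring

section OrderedField

variable {R : Type*} [Field R] [LinearOrder R] [IsStrictOrderedRing R]

theorem eq_smul_of_sq_trace_adjugate_mul_eq {A B : Matrix (Fin 2) (Fin 2) R}
    (hA : A.IsSymm) (hB : B.IsSymm) (ha : 0 < A 0 0) (hdet : 0 < A.det)
    (h : (adjugate A * B).trace ^ 2 = 4 * A.det * B.det) :
    B = (B 0 0 / A 0 0) • A := by
  set D := A 0 0 • B - B 0 0 • A with hD
  have key : A 0 0 ^ 2 * ((adjugate A * B).trace ^ 2 - 4 * A.det * B.det) =
      (A 0 0 * D 1 1 - 2 * A 0 1 * D 0 1) ^ 2 + 4 * A.det * D 0 1 ^ 2 := by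
    simp only [hD, det_fin_two, adjugate_fin_two, trace_fin_two, mul_apply, Fin.sum_univ_two,
      sub_apply, smul_apply, smul_eq_mul, of_apply, cons_val', cons_val_zero, cons_val_one,
      empty_val', cons_val_fin_one, hA.apply 0 1, hB.apply 0 1]
    ring
  rw [h, sub_self, mul_zero, eq_comm, add_eq_zero_iff_of_nonneg (sq_nonneg _) (by positivity)] at key
  have h01 : A 0 0 * B 0 1 = B 0 0 * A 0 1 := by
    simpa [hD, hdet.ne', sub_eq_zero] using key.2
  have h11 : A 0 0 * B 1 1 = B 0 0 * A 1 1 := by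
    simpa [hD, ha.ne', sub_eq_zero, h01] using key.1
  have hsmul : A 0 0 • B = B 0 0 • A := by
    ext i j
    fin_cases i <;> fin_cases j <;> simp [hA.apply 0 1, hB.apply 0 1, h01, h11, mul_comm (B 0 0)]
  rw [div_eq_inv_mul, mul_smul, ← hsmul, inv_smul_smul₀ ha.ne']

end OrderedField

theorem sqrt_det_add_smul_self (A : Matrix (Fin 2) (Fin 2) ℝ) {c : ℝ} (hc : 0 ≤ c) :
    √(A + c • A).det = √A.det + √(c • A).det := by
  rw [show A + c • A = (1 + c) • A by rw [add_smul, one_smul], det_smul, det_smul,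
    Fintype.card_fin, Real.sqrt_mul (by positivity), Real.sqrt_mul (by positivity),
    Real.sqrt_sq (by positivity), Real.sqrt_sq hc]
  ring

end Matrix

theorem sqrt_det_add_eq_iff_general (M₁ M₂ : Matrix (Fin 2) (Fin 2) ℝ)
    (h₁ : M₁.PosDef) (h₂ : M₂.PosDef) :
    Real.sqrt (M₁ + M₂).det = Real.sqrt M₁.det + Real.sqrt M₂.det ↔
      ∃ c : ℝ, 0 < c ∧ M₂ = c • M₁ := by
  constructor
  · intro h
    have hdet : 0 ≤ M₁.det + M₂.det + (adjugate M₁ * M₂).trace :=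
      det_add_fin_two M₁ M₂ ▸ (h₁.add h₂).det_pos.le
    rw [det_add_fin_two] at h
    refine ⟨_, div_pos h₂.diag_pos h₁.diag_pos, eq_smul_of_sq_trace_adjugate_mul_eq
      (isHermitian_iff_isSymm.mp h₁.isHermitian) (isHermitian_iff_isSymm.mp h₂.isHermitian)
      h₁.diag_pos h₁.det_pos ?_⟩
    exact Real.sq_eq_four_mul_of_sqrt_add_eq h₁.det_pos.le h₂.det_pos.le hdet h
  · rintro ⟨c, hc, rfl⟩
    exact M₁.sqrt_det_add_smul_self hc.le

/-- For real symmetric positive definite `2 × 2` matrices, equality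
`√det (M₁ + M₂) = √det M₁ + √det M₂` holds iff `M₁` and `M₂` are positive real
multiples of each other. -/
theorem sqrt_det_add_eq_iff (M₁ M₂ : Matrix (Fin 2) (Fin 2) ℝ)
    (h₁s : M₁ᵀ = M₁) (h₂s : M₂ᵀ = M₂) (h₁ : M₁.PosDef) (h₂ : M₂.PosDef) :
    Real.sqrt (M₁ + M₂).det = Real.sqrt M₁.det + Real.sqrt M₂.det ↔
      ∃ c : ℝ, 0 < c ∧ M₂ = c • M₁ :=
  sqrt_det_add_eq_iff_general M₁ M₂ h₁ h₂
end

section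
/- For any two compact convex subsets K and L of ℝ², the area of the Minkowski sum satisfies Area(K + L) ≥ Area(K) + Area(L). -/
open MeasureTheory Pointwise

/-- For compact convex (nonempty) subsets `K, L` of ℝ², the area of the
Minkowski sum satisfies `Area (K + L) ≥ Area K + Area L`. -/
theorem area_minkowski_sum_ge (K L : Set (ℝ × ℝ))
    (hKc : IsCompact K) (hKv : Convex ℝ K) (hKne : K.Nonempty)
    (hLc : IsCompact L) (hLv : Convex ℝ L) (hLne : L.Nonempty) :
    volume K + volume L ≤ volume (K + L) := by
  obtain ⟨k, hkK, hk⟩ := hKc.exists_isMaxOn hKne (continuous_fst.continuousOn)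
  obtain ⟨l, hlL, hl⟩ := hLc.exists_isMinOn hLne (continuous_fst.continuousOn)
  set A : Set (ℝ × ℝ) := (· + l) '' K with hA
  set B : Set (ℝ × ℝ) := (k + ·) '' L with hB
  have hAsub : A ⊆ K + L := by
    rintro _ ⟨x, hx, rfl⟩; exact Set.add_mem_add hx hlL
  have hBsub : B ⊆ K + L := by
    rintro _ ⟨y, hy, rfl⟩; exact Set.add_mem_add hkK hy
  have hvolA : volume A = volume K := by
    simp [hA, Set.image_add_right, measure_preimage_add_right]
  have hvolB : volume B = volume L := by
    simp [hB, Set.image_add_left, measure_preimage_add]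
  have hinter : volume (A ∩ B) = 0 := by
    have hsub : A ∩ B ⊆ {(k.1 + l.1)} ×ˢ (Set.univ : Set ℝ) := by
      rintro p ⟨⟨x, hx, rfl⟩, ⟨y, hy, hyeq⟩⟩
      have h1 : x.1 + l.1 ≤ k.1 + l.1 := by
        have := hk hx; simpa using add_le_add_right this l.1
      have h2 : k.1 + l.1 ≤ x.1 + l.1 := by
        have := hl hy
        have : k.1 + l.1 ≤ k.1 + y.1 := by simpa using add_le_add_left this k.1
        calc k.1 + l.1 ≤ k.1 + y.1 := this
          _ = (k + y).1 := rfl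
          _ = (x + l).1 := congrArg Prod.fst hyeq
      exact ⟨le_antisymm h1 h2, trivial⟩
    refine measure_mono_null hsub ?_
    rw [Measure.volume_eq_prod, Measure.prod_prod]
    simp
  have key : volume A + volume B = volume (A ∪ B) + volume (A ∩ B) :=
    (measure_union_add_inter' (hKc.image (by continuity)).measurableSet B).symm
  calc volume K + volume L = volume A + volume B := by rw [hvolA, hvolB]
    _ = volume (A ∪ B) + volume (A ∩ B) := key
    _ = volume (A ∪ B) := by rw [hinter, add_zero]
    _ ≤ volume (K + L) := measure_mono (Set.union_subset hAsub hBsub)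
end

section
/- For compact convex subsets K and L of ℝ², the strict inequality Area(K + L) > Area(K) + Area(L) holds unless K is a single point, or L is a single point, or K and L are two parallel segments (i.e. K = [a,b] and L = [c,d] are line segments with b − a and d − c linearly dependent). -/
/-!
Slice the plane by vertical lines. Suppose `K` projects onto `[a, b]` and `L` meets the vertical
line `x = m` in a set `L_m`. Over `t < a + m` the set `K + L` contains a translate of the part of
`L` left of that line, over `t ≥ b + m` a translate of the part right of it, and over
`a + m ≤ t < b + m` its slice contains `K_{t-m} + L_m`, of length at least `|K_{t-m}| + |L_m|` by
the one-dimensional Brunn–Minkowski inequality. Integrating,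
`|K + L| ≥ |K| + |L| + (b - a) |L_m|`.
A linear change of variables makes any two linearly independent chords of `K` and of `L`
horizontal and vertical, so the last term is positive. If no such pair of chords exists, `K` and
`L` lie on parallel lines, hence are points or parallel segments.
-/

open MeasureTheory Pointwise Set

theorem Real.volume_add_volume_le_volume_add {A B : Set ℝ} (hA : IsCompact A) (hB : IsCompact B)
    (hA₀ : A.Nonempty) (hB₀ : B.Nonempty) : volume A + volume B ≤ volume (A + B) := by
  set a := sSup A
  set b := sInf B
  have haA : a ∈ A := hA.sSup_mem hA₀
  have hbB : b ∈ B := hB.sInf_mem hB₀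
  have hsub : (b +ᵥ A) ∪ (a +ᵥ B) ⊆ A + B := by
    rintro _ (⟨x, hx, rfl⟩ | ⟨y, hy, rfl⟩)
    · simpa [add_comm] using add_mem_add hx hbB
    · exact add_mem_add haA hy
  have hdisj : AEDisjoint volume (b +ᵥ A) (a +ᵥ B) := by
    refine measure_mono_null (fun z hz => ?_) (measure_singleton (a + b))
    obtain ⟨⟨x, hx, rfl⟩, ⟨y, hy, hxy⟩⟩ := hz
    have hxa : x ≤ a := le_csSup hA.bddAbove hx
    have hby : b ≤ y := csInf_le hB.bddBelow hy
    simp only [vadd_eq_add, mem_singleton_iff] at hxy ⊢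
    linarith
  have hmeas : NullMeasurableSet (a +ᵥ B) volume :=
    (hB.vadd a).isClosed.measurableSet.nullMeasurableSet
  calc volume A + volume B = volume ((b +ᵥ A) ∪ (a +ᵥ B)) := by
        rw [measure_union₀ hmeas hdisj, measure_vadd, measure_vadd]
    _ ≤ volume (A + B) := measure_mono hsub

theorem IsCompact.preimage_prodMk {X Y : Type*} [TopologicalSpace X] [T1Space X]
    [TopologicalSpace Y] {K : Set (X × Y)} (hK : IsCompact K) (x : X) :
    IsCompact (Prod.mk x ⁻¹' K) := by
  refine (Topology.IsClosedEmbedding.mk (isEmbedding_prodMkRight x) ?_).isCompact_preimage hK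
  convert (isClosed_singleton (x := x)).prod (isClosed_univ (X := Y))
  ext ⟨a, b⟩
  simp [eq_comm]

theorem preimage_prodMk_add_subset {α β : Type*} [Add α] [Add β] (K L : Set (α × β)) (s t : α) :
    Prod.mk s ⁻¹' K + Prod.mk t ⁻¹' L ⊆ Prod.mk (s + t) ⁻¹' (K + L) := by
  rintro _ ⟨y, hy, z, hz, rfl⟩
  exact add_mem_add (show (s, y) ∈ K from hy) (show (t, z) ∈ L from hz)

theorem Convex.preimage_prodMk_nonempty {F : Type*} {K : Set (ℝ × F)} [AddCommGroup F] [Module ℝ F]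
    (hK : Convex ℝ K) {p q : ℝ × F} (hp : p ∈ K) (hq : q ∈ K) {t : ℝ} (ht : t ∈ Icc p.1 q.1) :
    (Prod.mk t ⁻¹' K).Nonempty := by
  have hconv : Convex ℝ (Prod.fst '' K) := hK.linear_image (LinearMap.fst ℝ ℝ F)
  obtain ⟨x, hx, rfl⟩ := hconv.ordConnected.out (mem_image_of_mem _ hp) (mem_image_of_mem _ hq) ht
  exact ⟨x.2, hx⟩

theorem Convex.segment_subset_preimage_prodMk {𝕜 E F : Type*} [Ring 𝕜] [PartialOrder 𝕜]
    [AddCommGroup E] [AddCommGroup F] [Module 𝕜 E] [Module 𝕜 F] {L : Set (E × F)}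
    (hL : Convex 𝕜 L) {x : E} {y₁ y₂ : F} (h₁ : (x, y₁) ∈ L) (h₂ : (x, y₂) ∈ L) :
    segment 𝕜 y₁ y₂ ⊆ Prod.mk x ⁻¹' L :=
  image_subset_iff.1 ((Prod.image_mk_segment_right x y₁ y₂).trans_subset (hL.segment_subset h₁ h₂))

theorem volume_preimage_prodMk_le_of_mem {K L : Set (ℝ × ℝ)} {x : ℝ × ℝ} (hx : x ∈ K) (t : ℝ) :
    volume (Prod.mk t ⁻¹' L) ≤ volume (Prod.mk (x.1 + t) ⁻¹' (K + L)) :=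
  calc volume (Prod.mk t ⁻¹' L) = volume ({x.2} + Prod.mk t ⁻¹' L) := by
        rw [singleton_add, image_add_left, measure_preimage_add]
    _ ≤ _ := measure_mono ((add_subset_add_right (s₂ := Prod.mk x.1 ⁻¹' K)
          (singleton_subset_iff.2 hx)).trans (preimage_prodMk_add_subset K L x.1 t))

theorem volume_eq_lintegral_preimage_prodMk {α β : Type*} [MeasureSpace α] [MeasureSpace β]
    [SFinite (volume : Measure β)] {S : Set (α × β)} (hS : MeasurableSet S) :
    volume S = ∫⁻ t, volume (Prod.mk t ⁻¹' S) := by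
  rw [Measure.volume_eq_prod, Measure.prod_apply hS]

theorem setLIntegral_volume_preimage_prodMk_le_of_mem {K L : Set (ℝ × ℝ)} {x : ℝ × ℝ}
    (hx : x ∈ K) {s : Set ℝ} (hs : MeasurableSet s) :
    ∫⁻ t in s, volume (Prod.mk t ⁻¹' L) ≤
      ∫⁻ t in (x.1 + ·) '' s, volume (Prod.mk t ⁻¹' (K + L)) :=
  calc ∫⁻ t in s, volume (Prod.mk t ⁻¹' L)
      ≤ ∫⁻ t in s, volume (Prod.mk (x.1 + t) ⁻¹' (K + L)) :=
        setLIntegral_mono' hs fun t _ => volume_preimage_prodMk_le_of_mem hx t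
    _ = _ := (measurePreserving_add_left volume x.1).setLIntegral_comp_emb
        (measurableEmbedding_addLeft x.1) (fun t => volume (Prod.mk t ⁻¹' (K + L))) s

theorem volume_eq_setLIntegral_Ico_of_fst_mem_Icc {β : Type*} [MeasureSpace β]
    [SFinite (volume : Measure β)] {K : Set (ℝ × β)} (hK : MeasurableSet K) {a b : ℝ}
    (h : ∀ x ∈ K, x.1 ∈ Icc a b) :
    volume K = ∫⁻ t in Ico a b, volume (Prod.mk t ⁻¹' K) := by
  rw [volume_eq_lintegral_preimage_prodMk hK, setLIntegral_congr Ico_ae_eq_Icc,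
    setLIntegral_eq_of_support_subset]
  refine Function.support_subset_iff'.2 fun t ht => ?_
  have hempty : Prod.mk t ⁻¹' K = ∅ := eq_empty_of_forall_notMem fun y hy => ht (h (t, y) hy)
  rw [hempty, measure_empty]

theorem lintegral_eq_setLIntegral_Iio_add_Ico_add_Ici {α : Type*} [MeasurableSpace α]
    [TopologicalSpace α] [LinearOrder α] [OrderClosedTopology α] [OpensMeasurableSpace α]
    (μ : Measure α) (f : α → ENNReal) {a b : α} (hab : a ≤ b) :
    ∫⁻ t, f t ∂μ =
      (∫⁻ t in Iio a, f t ∂μ) + (∫⁻ t in Ico a b, f t ∂μ) + ∫⁻ t in Ici b, f t ∂μ := by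
  rw [← lintegral_add_compl _ (measurableSet_Ici (a := a)), compl_Ici,
    ← Ico_union_Ici_eq_Ici hab,
    lintegral_union measurableSet_Ici ((Iio_disjoint_Ici le_rfl).mono_left Ico_subset_Iio_self)]
  ring

theorem volume_add_volume_add_mul_le_volume_add {K L : Set (ℝ × ℝ)} (hKc : IsCompact K)
    (hKv : Convex ℝ K) (hLc : IsCompact L) {p q r : ℝ × ℝ} (hp : p ∈ K) (hq : q ∈ K)
    (hK : ∀ x ∈ K, x.1 ∈ Icc p.1 q.1) (hr : r ∈ L) :
    volume K + volume L + volume (Prod.mk r.1 ⁻¹' L) * ENNReal.ofReal (q.1 - p.1) ≤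
      volume (K + L) := by
  set F := fun t => volume (Prod.mk t ⁻¹' (K + L))
  set g := fun t => volume (Prod.mk t ⁻¹' L)
  set m := r.1
  have hpq : p.1 ≤ q.1 := (hK p hp).2
  have hL : volume L = (∫⁻ t in Iio m, g t) + ∫⁻ t in Ici m, g t := by
    rw [add_comm, ← compl_Ici, lintegral_add_compl _ measurableSet_Ici,
      volume_eq_lintegral_preimage_prodMk hLc.measurableSet]
  have hleft : ∫⁻ t in Iio m, g t ≤ ∫⁻ t in Iio (p.1 + m), F t :=
    (setLIntegral_volume_preimage_prodMk_le_of_mem hp measurableSet_Iio).trans_eq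
      (by rw [image_const_add_Iio])
  have hright : ∫⁻ t in Ici m, g t ≤ ∫⁻ t in Ici (q.1 + m), F t :=
    (setLIntegral_volume_preimage_prodMk_le_of_mem hq measurableSet_Ici).trans_eq
      (by rw [image_const_add_Ici])
  have hmid : volume K + g m * ENNReal.ofReal (q.1 - p.1) ≤
      ∫⁻ t in Ico (p.1 + m) (q.1 + m), F t :=
    calc volume K + g m * ENNReal.ofReal (q.1 - p.1)
        = ∫⁻ t in Ico p.1 q.1, (volume (Prod.mk t ⁻¹' K) + g m) := by
          rw [lintegral_add_right _ measurable_const, setLIntegral_const, Real.volume_Ico,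
            volume_eq_setLIntegral_Ico_of_fst_mem_Icc hKc.measurableSet hK]
      _ ≤ ∫⁻ t in Ico p.1 q.1, F (t + m) := by
          refine setLIntegral_mono' measurableSet_Ico fun t ht => ?_
          exact (Real.volume_add_volume_le_volume_add (hKc.preimage_prodMk t)
            (hLc.preimage_prodMk m) (hKv.preimage_prodMk_nonempty hp hq (Ico_subset_Icc_self ht))
            ⟨r.2, hr⟩).trans (measure_mono (preimage_prodMk_add_subset K L t m))
      _ = ∫⁻ t in Ico (p.1 + m) (q.1 + m), F t := by
          rw [(measurePreserving_add_right volume m).setLIntegral_comp_emb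
            (measurableEmbedding_addRight m), image_add_const_Ico]
  have hKL := (volume_eq_lintegral_preimage_prodMk (hKc.add hLc).measurableSet).trans
    (lintegral_eq_setLIntegral_Iio_add_Ico_add_Ici volume F (add_le_add_left hpq m))
  calc volume K + volume L + g m * ENNReal.ofReal (q.1 - p.1)
      = (∫⁻ t in Iio m, g t) + (volume K + g m * ENNReal.ofReal (q.1 - p.1)) +
          ∫⁻ t in Ici m, g t := by
        rw [hL]; ring
    _ ≤ volume (K + L) := by
        rw [hKL]; gcongr

theorem volume_add_lt_volume_add_of_fst_lt {K L : Set (ℝ × ℝ)} (hKc : IsCompact K)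
    (hKv : Convex ℝ K) (hLc : IsCompact L) (hLv : Convex ℝ L) {p q : ℝ × ℝ} (hp : p ∈ K)
    (hq : q ∈ K) (hpq : p.1 < q.1) {x y₁ y₂ : ℝ} (h₁ : (x, y₁) ∈ L) (h₂ : (x, y₂) ∈ L)
    (hy : y₁ < y₂) : volume K + volume L < volume (K + L) := by
  obtain ⟨a, ha, ha_min⟩ := hKc.exists_isMinOn ⟨p, hp⟩ continuous_fst.continuousOn
  obtain ⟨b, hb, hb_max⟩ := hKc.exists_isMaxOn ⟨p, hp⟩ continuous_fst.continuousOn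
  have hslice : volume (Prod.mk x ⁻¹' L) ≠ 0 := by
    refine ne_of_gt (lt_of_lt_of_le ?_ (measure_mono (hLv.segment_subset_preimage_prodMk h₁ h₂)))
    rw [segment_eq_Icc hy.le, Real.volume_Icc]
    exact ENNReal.ofReal_pos.2 (sub_pos.2 hy)
  have hwidth : ENNReal.ofReal (b.1 - a.1) ≠ 0 :=
    (ENNReal.ofReal_pos.2 (by linarith [isMinOn_iff.1 ha_min p hp, isMaxOn_iff.1 hb_max q hq])).ne'
  calc volume K + volume L
      < volume K + volume L + volume (Prod.mk x ⁻¹' L) * ENNReal.ofReal (b.1 - a.1) :=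
        ENNReal.lt_add_right (ENNReal.add_ne_top.2 ⟨hKc.measure_ne_top, hLc.measure_ne_top⟩)
          (mul_ne_zero hslice hwidth)
    _ ≤ volume (K + L) :=
        volume_add_volume_add_mul_le_volume_add hKc hKv hLc ha hb
          (fun z hz => ⟨isMinOn_iff.1 ha_min z hz, isMaxOn_iff.1 hb_max z hz⟩) h₁

theorem addHaar_add_lt_addHaar_add_image_iff {E : Type*} [NormedAddCommGroup E]
    [NormedSpace ℝ E] [MeasurableSpace E] [BorelSpace E] [FiniteDimensional ℝ E] (μ : Measure E)
    [μ.IsAddHaarMeasure] (T : E ≃ₗ[ℝ] E) (K L : Set E) :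
    μ (⇑T '' K) + μ (⇑T '' L) < μ (⇑T '' K + ⇑T '' L) ↔ μ K + μ L < μ (K + L) := by
  have hdet : ENNReal.ofReal |LinearMap.det (T : E →ₗ[ℝ] E)| ≠ 0 := by
    simpa using LinearEquiv.isUnit_det' T |>.ne_zero
  have himage : T '' K + T '' L = T '' (K + L) := (image_add T).symm
  rw [himage]
  simp only [← LinearEquiv.coe_coe, Measure.addHaar_image_linearMap, ← mul_add]
  exact (ENNReal.mul_right_strictMono hdet ENNReal.ofReal_ne_top).lt_iff_lt

theorem volume_add_lt_volume_add_of_linearIndependent {K L : Set (ℝ × ℝ)} (hKc : IsCompact K)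
    (hKv : Convex ℝ K) (hLc : IsCompact L) (hLv : Convex ℝ L) {p q r s : ℝ × ℝ} (hp : p ∈ K)
    (hq : q ∈ K) (hr : r ∈ L) (hs : s ∈ L) (hind : LinearIndependent ℝ ![q - p, s - r]) :
    volume K + volume L < volume (K + L) := by
  let B := basisOfLinearIndependentOfCardEqFinrank hind (by simp)
  let T : (ℝ × ℝ) ≃ₗ[ℝ] ℝ × ℝ := B.equiv (Module.Basis.finTwoProd ℝ) (Equiv.refl _)
  have hT : ∀ i, T (![q - p, s - r] i) = Module.Basis.finTwoProd ℝ i := fun i => by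
    rw [← coe_basisOfLinearIndependentOfCardEqFinrank hind (by simp), Module.Basis.equiv_apply]
    rfl
  have hTq : T q = T p + (1, 0) := by simpa [sub_eq_iff_eq_add'] using hT 0
  have hTs : T s = T r + (0, 1) := by simpa [sub_eq_iff_eq_add'] using hT 1
  have hcont : Continuous T := T.toContinuousLinearEquiv.continuous
  rw [← addHaar_add_lt_addHaar_add_image_iff volume T]
  exact volume_add_lt_volume_add_of_fst_lt (y₂ := (T r).2 + 1) (hKc.image hcont)
    (hKv.linear_image T.toLinearMap) (hLc.image hcont) (hLv.linear_image T.toLinearMap)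
    (mem_image_of_mem T hp) (mem_image_of_mem T hq) (by simp [hTq]) (mem_image_of_mem T hr)
    ⟨s, hs, hTs.trans (Prod.ext (add_zero _) rfl)⟩ (lt_add_one _)

theorem mem_span_singleton_of_not_linearIndependent {K V : Type*} [DivisionRing K]
    [AddCommGroup V] [Module K V] {x y : V} (hx : x ≠ 0) (h : ¬ LinearIndependent K ![x, y]) :
    y ∈ K ∙ x := by
  rw [LinearIndependent.pair_iff' hx] at h
  push Not at h
  exact Submodule.mem_span_singleton.2 h

theorem IsCompact.exists_eq_segment_of_sub_mem_span {E : Type*} [AddCommGroup E] [Module ℝ E]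
    [TopologicalSpace E] [IsTopologicalAddGroup E] [ContinuousSMul ℝ E] [T2Space E] {X : Set E}
    (hXc : IsCompact X) (hXv : Convex ℝ X) (hX₀ : X.Nonempty) {v : E}
    (hX : ∀ x ∈ X, ∀ y ∈ X, y - x ∈ ℝ ∙ v) : ∃ a b, X = segment ℝ a b := by
  obtain ⟨x₀, hx₀⟩ := hX₀
  rcases eq_or_ne v 0 with rfl | hv
  · refine ⟨x₀, x₀, ?_⟩
    rw [segment_same]
    exact eq_singleton_iff_unique_mem.2
      ⟨hx₀, fun y hy => by simpa [sub_eq_zero] using hX x₀ hx₀ y hy⟩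
  let f : ℝ →ᵃ[ℝ] E := AffineMap.lineMap x₀ (x₀ + v)
  have hf : ⇑f = Homeomorph.addRight x₀ ∘ fun t : ℝ => t • v := by
    ext t
    simp [f, AffineMap.lineMap_apply]
  have hSc : IsCompact (f ⁻¹' X) := by
    rw [hf]
    exact ((Homeomorph.addRight x₀).isClosedEmbedding.comp
      (isClosedEmbedding_smul_left hv)).isCompact_preimage hXc
  have hS₀ : (f ⁻¹' X).Nonempty := ⟨0, by simpa [f] using hx₀⟩
  have hXf : f '' (f ⁻¹' X) = X := by
    refine image_preimage_eq_of_subset fun y hy => ?_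
    obtain ⟨t, ht⟩ := Submodule.mem_span_singleton.1 (hX x₀ hx₀ y hy)
    exact ⟨t, by simp [hf, ht]⟩
  obtain ⟨a, b, hab, hS⟩ : ∃ a b, a ≤ b ∧ f ⁻¹' X = Icc a b :=
    ⟨_, _, csInf_le_csSup hS₀ hSc.bddBelow hSc.bddAbove,
      eq_Icc_of_connected_compact ⟨hS₀, (hXv.affine_preimage f).isPreconnected⟩ hSc⟩
  refine ⟨f a, f b, ?_⟩
  rw [← hXf, hS, ← segment_eq_Icc hab, image_segment]

/-- For compact convex (nonempty) subsets `K, L` of ℝ², the strict inequality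
`Area (K + L) > Area K + Area L` holds unless `K` is a single point, or `L` is
a single point, or `K` and `L` are two parallel segments. -/
theorem area_minkowski_sum_gt (K L : Set (ℝ × ℝ))
    (hKc : IsCompact K) (hKv : Convex ℝ K) (hKne : K.Nonempty)
    (hLc : IsCompact L) (hLv : Convex ℝ L) (hLne : L.Nonempty)
    (hK : ¬ ∃ p : ℝ × ℝ, K = {p}) (hL : ¬ ∃ p : ℝ × ℝ, L = {p})
    (hseg : ¬ ∃ a b c d : ℝ × ℝ, K = segment ℝ a b ∧ L = segment ℝ c d ∧
      ¬ LinearIndependent ℝ ![b - a, d - c]) :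
    volume K + volume L < volume (K + L) := by
  obtain ⟨p, hp, q, hq, hpq⟩ := hKne.exists_eq_singleton_or_nontrivial.resolve_left hK
  obtain ⟨r, hr, s, hs, hrs⟩ := hLne.exists_eq_singleton_or_nontrivial.resolve_left hL
  by_contra hle
  have hpar : ∀ p ∈ K, ∀ q ∈ K, ∀ r ∈ L, ∀ s ∈ L, ¬ LinearIndependent ℝ ![q - p, s - r] :=
    fun p hp q hq r hr s hs hind =>
      hle (volume_add_lt_volume_add_of_linearIndependent hKc hKv hLc hLv hp hq hr hs hind)
  obtain ⟨a, b, rfl⟩ := hKc.exists_eq_segment_of_sub_mem_span hKv hKne fun x hx y hy =>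
    mem_span_singleton_of_not_linearIndependent (sub_ne_zero.2 hrs.symm)
      (LinearIndependent.pair_symm_iff.not.1 (hpar x hx y hy r hr s hs))
  obtain ⟨c, d, rfl⟩ := hLc.exists_eq_segment_of_sub_mem_span hLv hLne fun x hx y hy =>
    mem_span_singleton_of_not_linearIndependent (sub_ne_zero.2 hpq.symm) (hpar p hp q hq x hx y hy)
  exact hseg ⟨a, b, c, d, rfl, rfl, hpar a (left_mem_segment ℝ a b) b (right_mem_segment ℝ a b)
    c (left_mem_segment ℝ c d) d (right_mem_segment ℝ c d)⟩
end

section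
/- For any nonzero polynomial f in two complex variables, every subgradient of the Ronkin function N_f lies in the Newton polygon: if x, v ∈ ℝ² satisfy N_f(y) ≥ N_f(x) + ⟨v, y − x⟩ for all y ∈ ℝ², then v ∈ Δ. -/
open MeasureTheory

/-- The Newton polygon of `f`: the convex hull of the exponent vectors of the
monomials appearing in `f` with nonzero coefficient. -/
noncomputable def newtonPolygon (f : MvPolynomial (Fin 2) ℂ) : Set (ℝ × ℝ) :=
  convexHull ℝ ((fun d : Fin 2 →₀ ℕ => ((d 0 : ℝ), (d 1 : ℝ))) '' (f.support : Set (Fin 2 →₀ ℕ)))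

/-- The Ronkin function of `f`. -/
noncomputable def ronkin (f : MvPolynomial (Fin 2) ℂ) (x : ℝ × ℝ) : ℝ :=
  (2 * Real.pi) ^ (-2 : ℤ) *
    ∫ θ in Set.Icc ((0, 0) : ℝ × ℝ) (2 * Real.pi, 2 * Real.pi),
      Real.log (‖mvEval f (Complex.exp (x.1 + θ.1 * Complex.I))
        (Complex.exp (x.2 + θ.2 * Complex.I))‖)

/-! If `v` lies outside the Newton polygon, a separating direction `u` can be chosen generic, so
that `⟨·, u⟩` has a unique maximiser `a` on the exponents of `f`. Far out along the ray `x + t u`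
the monomial `a` then dominates all others on the torus, so `f` has no zeros there; this is what
makes `log |f|` continuous, hence integrable, on that torus, and it bounds the Ronkin function by
`log ∑_d |c_d| e^{⟨d, x + t u⟩} ≤ log ∑_d |c_d| e^{⟨d, x⟩} + t ⟨a, u⟩`. The subgradient
inequality gives the lower bound `N_f(x) + t ⟨v, u⟩`, and `⟨a, u⟩ < ⟨v, u⟩` makes the two
incompatible for large `t`. -/

open Filter Topology

-- `ℝ × ℝ` carries the sup norm, so Mathlib's `inner` is not available on it.
def dot₂ (p q : ℝ × ℝ) : ℝ := p.1 * q.1 + p.2 * q.2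

lemma continuous_dot₂_left (p : ℝ × ℝ) : Continuous (dot₂ p) := by
  unfold dot₂; fun_prop

lemma exists_forall_dot₂_lt_of_notMem_convexHull {P : Set (ℝ × ℝ)} (hP : P.Finite) {v : ℝ × ℝ}
    (hv : v ∉ convexHull ℝ P) : ∃ u, ∀ p ∈ P, dot₂ p u < dot₂ v u := by
  obtain ⟨φ, c, hφP, hφv⟩ := geometric_hahn_banach_closed_point (convex_convexHull ℝ P)
    (hP.isClosed_convexHull ℝ) hv
  have hφ : ∀ p : ℝ × ℝ, φ p = dot₂ p (φ (1, 0), φ (0, 1)) := fun p => by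
    have hp : p = p.1 • ((1 : ℝ), (0 : ℝ)) + p.2 • ((0 : ℝ), (1 : ℝ)) := by ext <;> simp
    nth_rewrite 1 [hp]
    rw [map_add, map_smul, map_smul, smul_eq_mul, smul_eq_mul, dot₂]
  refine ⟨(φ (1, 0), φ (0, 1)), fun p hp => ?_⟩
  rw [← hφ p, ← hφ v]
  exact (hφP p (subset_convexHull ℝ P hp)).trans hφv

lemma dense_setOf_dot₂_ne {p q : ℝ × ℝ} (hpq : p ≠ q) : Dense {u | dot₂ p u ≠ dot₂ q u} := by
  intro u
  by_cases hu : dot₂ p u = dot₂ q u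
  · -- on the line through `u` in direction `p - q`, the two pairings differ except at `u`
    have hw : 0 < (p.1 - q.1) ^ 2 + (p.2 - q.2) ^ 2 := by
      rcases (not_and_or.1 (mt Prod.ext_iff.2 hpq)) with h | h
      · have := sub_ne_zero.2 h; positivity
      · have := sub_ne_zero.2 h; positivity
    have hcont : Continuous fun ε : ℝ => u + ε • (p - q) := by fun_prop
    have hlim : Tendsto (fun ε : ℝ => u + ε • (p - q)) (𝓝[≠] 0) (𝓝 u) :=
      tendsto_nhdsWithin_of_tendsto_nhds (hcont.tendsto' 0 u (by simp))
    refine mem_closure_of_tendsto hlim (eventually_nhdsWithin_of_forall fun ε hε => ?_)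
    have : dot₂ p (u + ε • (p - q)) - dot₂ q (u + ε • (p - q)) =
        ε * ((p.1 - q.1) ^ 2 + (p.2 - q.2) ^ 2) := by
      simp only [dot₂, Prod.fst_add, Prod.snd_add, Prod.smul_fst, Prod.smul_snd, Prod.fst_sub,
        Prod.snd_sub, smul_eq_mul] at hu ⊢
      linear_combination hu
    exact sub_ne_zero.1 (this ▸ mul_ne_zero hε hw.ne')
  · exact subset_closure hu

lemma eventually_residual_injOn_dot₂ {P : Set (ℝ × ℝ)} (hP : P.Finite) :
    ∀ᶠ u in residual (ℝ × ℝ), P.InjOn (dot₂ · u) := by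
  refine hP.eventually_all.2 fun p _ => hP.eventually_all.2 fun q _ => ?_
  by_cases hpq : p = q
  · exact Eventually.of_forall fun _ _ => hpq
  · filter_upwards [residual_of_dense_open
      (isOpen_ne_fun (continuous_dot₂_left p) (continuous_dot₂_left q)) (dense_setOf_dot₂_ne hpq)]
      with u hu heq using absurd heq hu

lemma exists_injOn_dot₂_forall_lt_of_notMem_convexHull {P : Set (ℝ × ℝ)} (hP : P.Finite)
    {v : ℝ × ℝ} (hv : v ∉ convexHull ℝ P) :
    ∃ u, P.InjOn (dot₂ · u) ∧ ∀ p ∈ P, dot₂ p u < dot₂ v u := by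
  obtain ⟨u₀, hu₀⟩ := exists_forall_dot₂_lt_of_notMem_convexHull hP hv
  have hopen : IsOpen {u | ∀ p ∈ P, dot₂ p u < dot₂ v u} := by
    simp only [Set.ofPred_forall]
    exact hP.isOpen_biInter fun p _ => isOpen_lt (continuous_dot₂_left p) (continuous_dot₂_left v)
  exact (dense_of_mem_residual (eventually_residual_injOn_dot₂ hP)).exists_mem_open hopen ⟨u₀, hu₀⟩

-- `newtonPolygon f` is the convex hull of `expVec '' f.support`.
def expVec (d : Fin 2 →₀ ℕ) : ℝ × ℝ := ((d 0 : ℝ), (d 1 : ℝ))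

lemma expVec_injective : Function.Injective expVec := fun d d' h => by
  simp only [expVec, Prod.mk.injEq, Nat.cast_inj] at h
  ext i; fin_cases i
  exacts [h.1, h.2]

lemma exists_dominant_direction_of_notMem_newtonPolygon {f : MvPolynomial (Fin 2) ℂ} (hf : f ≠ 0)
    {v : ℝ × ℝ} (hv : v ∉ newtonPolygon f) :
    ∃ u, ∃ a ∈ f.support, (∀ d ∈ f.support, d ≠ a → dot₂ (expVec d) u < dot₂ (expVec a) u) ∧
      dot₂ (expVec a) u < dot₂ v u := by
  obtain ⟨u, hinj, hsep⟩ := exists_injOn_dot₂_forall_lt_of_notMem_convexHull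
    ((f.support.finite_toSet).image expVec) hv
  obtain ⟨a, ha, hmax⟩ := f.support.exists_max_image (fun d => dot₂ (expVec d) u)
    (MvPolynomial.support_nonempty.2 hf)
  refine ⟨u, a, ha, fun d hd hda => (hmax d hd).lt_of_ne fun heq => hda ?_,
    hsep _ ⟨a, ha, rfl⟩⟩
  exact expVec_injective (hinj ⟨d, hd, rfl⟩ ⟨a, ha, rfl⟩ heq)


noncomputable def torusEval (f : MvPolynomial (Fin 2) ℂ) (y θ : ℝ × ℝ) : ℂ :=
  mvEval f (Complex.exp (y.1 + θ.1 * Complex.I)) (Complex.exp (y.2 + θ.2 * Complex.I))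

noncomputable def monomialNorm (f : MvPolynomial (Fin 2) ℂ) (y : ℝ × ℝ) (d : Fin 2 →₀ ℕ) : ℝ :=
  ‖MvPolynomial.coeff d f‖ * Real.exp (dot₂ (expVec d) y)

section Torus

variable (f : MvPolynomial (Fin 2) ℂ) (y θ : ℝ × ℝ)

lemma torusEval_eq_sum : torusEval f y θ = ∑ d ∈ f.support, MvPolynomial.coeff d f *
    (Complex.exp (y.1 + θ.1 * Complex.I) ^ d 0 * Complex.exp (y.2 + θ.2 * Complex.I) ^ d 1) := by
  rw [torusEval, mvEval, MvPolynomial.eval_eq']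
  simp [Fin.prod_univ_two]

lemma norm_torusEval_term (d : Fin 2 →₀ ℕ) : ‖MvPolynomial.coeff d f *
    (Complex.exp (y.1 + θ.1 * Complex.I) ^ d 0 * Complex.exp (y.2 + θ.2 * Complex.I) ^ d 1)‖ =
    monomialNorm f y d := by
  simp only [norm_mul, norm_pow, Complex.norm_exp, Complex.add_re, Complex.ofReal_re,
    Complex.mul_re, Complex.I_re, Complex.I_im, Complex.ofReal_im, mul_zero, mul_one, sub_zero,
    add_zero, monomialNorm, dot₂, expVec, Real.exp_add, ← Real.exp_nat_mul]

lemma norm_sum_torusEval_term_le (s : Finset (Fin 2 →₀ ℕ)) : ‖∑ d ∈ s, MvPolynomial.coeff d f *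
    (Complex.exp (y.1 + θ.1 * Complex.I) ^ d 0 * Complex.exp (y.2 + θ.2 * Complex.I) ^ d 1)‖ ≤
    ∑ d ∈ s, monomialNorm f y d :=
  (norm_sum_le _ _).trans_eq (Finset.sum_congr rfl fun d _ => norm_torusEval_term f y θ d)

lemma norm_torusEval_le : ‖torusEval f y θ‖ ≤ ∑ d ∈ f.support, monomialNorm f y d := by
  rw [torusEval_eq_sum]
  exact norm_sum_torusEval_term_le f y θ _

lemma sub_sum_erase_le_norm_torusEval {a : Fin 2 →₀ ℕ} (ha : a ∈ f.support) :
    monomialNorm f y a - ∑ d ∈ f.support.erase a, monomialNorm f y d ≤ ‖torusEval f y θ‖ := by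
  rw [torusEval_eq_sum, ← Finset.add_sum_erase _ _ ha, ← norm_torusEval_term f y θ a]
  refine le_trans ?_ (norm_sub_le_norm_add _ _)
  gcongr
  exact norm_sum_torusEval_term_le f y θ _

lemma torusEval_ne_zero_of_dominant {a : Fin 2 →₀ ℕ} (ha : a ∈ f.support)
    (hdom : ∑ d ∈ f.support.erase a, monomialNorm f y d < monomialNorm f y a) :
    torusEval f y θ ≠ 0 :=
  norm_pos_iff.1 ((sub_pos.2 hdom).trans_le (sub_sum_erase_le_norm_torusEval f y θ ha))

end Torus

lemma continuous_torusEval (f : MvPolynomial (Fin 2) ℂ) (y : ℝ × ℝ) :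
    Continuous (torusEval f y) := by
  rw [show torusEval f y = _ from funext (torusEval_eq_sum f y)]
  fun_prop

lemma volume_real_Icc_two_pi :
    volume.real (Set.Icc ((0, 0) : ℝ × ℝ) (2 * Real.pi, 2 * Real.pi)) = (2 * Real.pi) ^ 2 := by
  rw [measureReal_def, ← Set.Icc_prod_Icc, Measure.volume_eq_prod, Measure.prod_prod,
    Real.volume_Icc, sub_zero, ENNReal.toReal_mul, ENNReal.toReal_ofReal (by positivity), sq]

lemma ronkin_eq_setAverage (f : MvPolynomial (Fin 2) ℂ) (y : ℝ × ℝ) :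
    ronkin f y = ⨍ θ in Set.Icc ((0, 0) : ℝ × ℝ) (2 * Real.pi, 2 * Real.pi),
      Real.log ‖torusEval f y θ‖ := by
  rw [setAverage_eq, volume_real_Icc_two_pi, smul_eq_mul, ← zpow_natCast, ← zpow_neg]
  rfl

lemma ronkin_le_log_sum_monomialNorm (f : MvPolynomial (Fin 2) ℂ) (y : ℝ × ℝ)
    (hne : ∀ θ, torusEval f y θ ≠ 0) :
    ronkin f y ≤ Real.log (∑ d ∈ f.support, monomialNorm f y d) := by
  have hvol : volume.real (Set.Icc ((0, 0) : ℝ × ℝ) (2 * Real.pi, 2 * Real.pi)) ≠ 0 := by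
    rw [volume_real_Icc_two_pi]; positivity
  have hint : IntegrableOn (fun θ => Real.log ‖torusEval f y θ‖)
      (Set.Icc ((0, 0) : ℝ × ℝ) (2 * Real.pi, 2 * Real.pi)) :=
    ((continuous_torusEval f y).norm.log fun θ => norm_ne_zero_iff.2 (hne θ)
      ).continuousOn.integrableOn_compact isCompact_Icc
  obtain ⟨θ, -, hθ⟩ := exists_setAverage_le (ENNReal.toReal_ne_zero.1 hvol).1
    (ENNReal.toReal_ne_zero.1 hvol).2 hint
  rw [ronkin_eq_setAverage]
  exact hθ.trans (Real.log_le_log (norm_pos_iff.2 (hne θ)) (norm_torusEval_le f y θ))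

section Ray

variable {f : MvPolynomial (Fin 2) ℂ} {a : Fin 2 →₀ ℕ} {u : ℝ × ℝ}

lemma monomialNorm_pos {d : Fin 2 →₀ ℕ} (hd : d ∈ f.support) (y : ℝ × ℝ) :
    0 < monomialNorm f y d :=
  mul_pos (norm_pos_iff.2 (MvPolynomial.mem_support_iff.1 hd)) (Real.exp_pos _)

lemma monomialNorm_add_smul (x : ℝ × ℝ) (t : ℝ) (d : Fin 2 →₀ ℕ) :
    monomialNorm f (x + t • u) d = monomialNorm f x d * Real.exp (t * dot₂ (expVec d) u) := by
  simp only [monomialNorm, dot₂, Prod.fst_add, Prod.snd_add, Prod.smul_fst, Prod.smul_snd,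
    smul_eq_mul, mul_assoc, ← Real.exp_add]
  ring_nf

lemma eventually_sum_erase_monomialNorm_lt (ha : a ∈ f.support)
    (hmax : ∀ d ∈ f.support, d ≠ a → dot₂ (expVec d) u < dot₂ (expVec a) u) (x : ℝ × ℝ) :
    ∀ᶠ t : ℝ in atTop, ∑ d ∈ f.support.erase a, monomialNorm f (x + t • u) d <
      monomialNorm f (x + t • u) a := by
  set m := dot₂ (expVec a) u
  have hdecay : Tendsto (fun t : ℝ => ∑ d ∈ f.support.erase a,
      monomialNorm f x d * Real.exp (t * (dot₂ (expVec d) u - m))) atTop (𝓝 0) := by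
    rw [← Finset.sum_const_zero (s := f.support.erase a)]
    refine tendsto_finsetSum _ fun d hd => ?_
    have hgap : dot₂ (expVec d) u - m < 0 :=
      sub_neg.2 (hmax d (Finset.mem_of_mem_erase hd) (Finset.ne_of_mem_erase hd))
    simpa using (Real.tendsto_exp_atBot.comp
      (tendsto_id.atTop_mul_const_of_neg hgap)).const_mul (monomialNorm f x d)
  filter_upwards [hdecay.eventually (gt_mem_nhds (monomialNorm_pos ha x))] with t ht
  calc ∑ d ∈ f.support.erase a, monomialNorm f (x + t • u) d
      = Real.exp (t * m) * ∑ d ∈ f.support.erase a,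
          monomialNorm f x d * Real.exp (t * (dot₂ (expVec d) u - m)) := by
        rw [Finset.mul_sum]
        refine Finset.sum_congr rfl fun d _ => ?_
        rw [monomialNorm_add_smul, mul_left_comm, ← Real.exp_add]
        ring_nf
    _ < Real.exp (t * m) * monomialNorm f x a := mul_lt_mul_of_pos_left ht (Real.exp_pos _)
    _ = monomialNorm f (x + t • u) a := by rw [monomialNorm_add_smul, mul_comm]

lemma sum_monomialNorm_add_smul_le {m : ℝ} (hm : ∀ d ∈ f.support, dot₂ (expVec d) u ≤ m)
    (x : ℝ × ℝ) {t : ℝ} (ht : 0 ≤ t) :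
    ∑ d ∈ f.support, monomialNorm f (x + t • u) d ≤
      Real.exp (t * m) * ∑ d ∈ f.support, monomialNorm f x d := by
  rw [Finset.mul_sum]
  refine Finset.sum_le_sum fun d hd => ?_
  rw [monomialNorm_add_smul, mul_comm (Real.exp _)]
  gcongr
  · exact (monomialNorm_pos hd x).le
  · exact hm d hd

lemma eventually_ronkin_add_smul_le (ha : a ∈ f.support)
    (hmax : ∀ d ∈ f.support, d ≠ a → dot₂ (expVec d) u < dot₂ (expVec a) u) (x : ℝ × ℝ) :
    ∀ᶠ t in atTop, ronkin f (x + t • u) ≤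
      Real.log (∑ d ∈ f.support, monomialNorm f x d) + t * dot₂ (expVec a) u := by
  have hle : ∀ d ∈ f.support, dot₂ (expVec d) u ≤ dot₂ (expVec a) u := fun d hd => by
    rcases eq_or_ne d a with rfl | hda
    exacts [le_rfl, (hmax d hd hda).le]
  have hpos : ∀ y, 0 < ∑ d ∈ f.support, monomialNorm f y d := fun y =>
    Finset.sum_pos (fun d hd => monomialNorm_pos hd y) ⟨a, ha⟩
  filter_upwards [eventually_sum_erase_monomialNorm_lt ha hmax x, eventually_ge_atTop 0]
    with t hdom ht
  calc ronkin f (x + t • u)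
      ≤ Real.log (∑ d ∈ f.support, monomialNorm f (x + t • u) d) :=
        ronkin_le_log_sum_monomialNorm f _ fun θ => torusEval_ne_zero_of_dominant f _ θ ha hdom
    _ ≤ Real.log (Real.exp (t * dot₂ (expVec a) u) * ∑ d ∈ f.support, monomialNorm f x d) :=
        Real.log_le_log (hpos _) (sum_monomialNorm_add_smul_le hle x ht)
    _ = _ := by rw [Real.log_mul (Real.exp_ne_zero _) (hpos x).ne', Real.log_exp, add_comm]

end Ray

/-- Every subgradient of the Ronkin function lies in the Newton polygon. -/
theorem ronkin_subgradient_mem_newtonPolygon (f : MvPolynomial (Fin 2) ℂ) (hf : f ≠ 0)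
    (x v : ℝ × ℝ)
    (h : ∀ y : ℝ × ℝ, ronkin f y ≥ ronkin f x + (v.1 * (y.1 - x.1) + v.2 * (y.2 - x.2))) :
    v ∈ newtonPolygon f := by
  by_contra hv
  obtain ⟨u, a, ha, hmax, hgap⟩ := exists_dominant_direction_of_notMem_newtonPolygon hf hv
  set C := Real.log (∑ d ∈ f.support, monomialNorm f x d)
  have hlarge : ∀ᶠ t in atTop, C - ronkin f x < t * (dot₂ v u - dot₂ (expVec a) u) :=
    (tendsto_id.atTop_mul_const (sub_pos.2 hgap)).eventually_gt_atTop _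
  obtain ⟨t, hupper, ht⟩ := ((eventually_ronkin_add_smul_le ha hmax x).and hlarge).exists
  have hlower : ronkin f x + t * dot₂ v u ≤ ronkin f (x + t • u) := by
    convert h (x + t • u) using 2
    simp only [dot₂, Prod.fst_add, Prod.snd_add, Prod.smul_fst, Prod.smul_snd, smul_eq_mul,
      add_sub_cancel_left]
    ring
  linarith
end

section
/- If f is a nonzero polynomial in two complex variables whose Newton polygon Δ contains more than one point, then the amoeba 𝒜 of f is an unbounded subset of ℝ². -/
open MeasureTheory

/-!
Two distinct exponent vectors of `f` differ in the exponent of some variable `z_j`. Viewed as a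
polynomial in `z_j` whose coefficients are polynomials in the other variable `w`, `f` has two
nonzero coefficients in distinct degrees, and some `w` of arbitrarily large modulus keeps both of
them nonzero. Then `f(·, w)` has two monomials of distinct degrees, so it has a nonzero root `z_j`
because `ℂ` is algebraically closed. This gives points of the amoeba with coordinate `log |w|`
arbitrarily large.
-/

open Polynomial in
theorem Polynomial.exists_isRoot_ne_zero_of_coeff_ne_zero {K : Type*} [Field K] [IsAlgClosed K]
    {g : K[X]} {m n : ℕ} (hm : g.coeff m ≠ 0) (hn : g.coeff n ≠ 0) (hmn : m ≠ n) :
    ∃ z ≠ 0, g.IsRoot z := by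
  classical
  by_contra! h
  have hg : g ≠ 0 := fun h0 => hm (by simp [h0])
  have : g.natTrailingDegree = g.natDegree := by
    rw [← rootMultiplicity_eq_natTrailingDegree', ← IsAlgClosed.card_roots_eq_natDegree,
      ← count_roots, Multiset.count_eq_card]
    intro x hx
    by_contra hx0
    exact h x (Ne.symm hx0) (isRoot_of_mem_roots hx)
  have := natTrailingDegree_le_of_ne_zero hm
  have := natTrailingDegree_le_of_ne_zero hn
  have := le_natDegree_of_ne_zero hm
  have := le_natDegree_of_ne_zero hn
  omega

namespace MvPolynomial

theorem finSuccEquiv_coeff_ne_zero {R : Type*} [CommSemiring R] {n : ℕ}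
    {f : MvPolynomial (Fin (n + 1)) R} {d : Fin (n + 1) →₀ ℕ} (hd : d ∈ f.support) :
    (finSuccEquiv R n f).coeff (d 0) ≠ 0 := by
  intro h
  have := finSuccEquiv_coeff_coeff d.tail f (d 0)
  rw [h, coeff_zero, Finsupp.cons_tail] at this
  exact mem_support_iff.mp hd this.symm

variable {K : Type*} [Field K] [IsAlgClosed K] {n : ℕ} {f : MvPolynomial (Fin (n + 1)) K}
  {d e : Fin (n + 1) →₀ ℕ}

theorem exists_eval_cons_eq_zero_of_mem_support (hd : d ∈ f.support) (he : e ∈ f.support)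
    (hde : d 0 ≠ e 0) {s : Fin n → Set K} (hs : ∀ i, (s i).Infinite) :
    ∃ z ≠ 0, ∃ w ∈ Set.univ.pi s, eval (Fin.cons z w) f = 0 := by
  set F := finSuccEquiv K n f
  have hF : F.coeff (d 0) * F.coeff (e 0) ≠ 0 :=
    mul_ne_zero (finSuccEquiv_coeff_ne_zero hd) (finSuccEquiv_coeff_ne_zero he)
  obtain ⟨w, hws, hw⟩ :
      ∃ w ∈ Set.univ.pi s, eval w (F.coeff (d 0) * F.coeff (e 0)) ≠ 0 := by
    by_contra! h
    exact hF (funext_set s hs fun x hx => by simpa using h x hx)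
  rw [map_mul, mul_ne_zero_iff] at hw
  obtain ⟨z, hz, hroot⟩ := (F.map (eval w)).exists_isRoot_ne_zero_of_coeff_ne_zero
    (by rw [Polynomial.coeff_map]; exact hw.1) (by rw [Polynomial.coeff_map]; exact hw.2) hde
  exact ⟨z, hz, w, hws, by rw [eval_eq_eval_mv_eval']; exact hroot⟩

theorem exists_eval_eq_zero_of_mem_support (hd : d ∈ f.support) (he : e ∈ f.support)
    {j : Fin (n + 1)} (hde : d j ≠ e j) {s : Fin (n + 1) → Set K}
    (hs : ∀ i ≠ j, (s i).Infinite) :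
    ∃ x : Fin (n + 1) → K, x j ≠ 0 ∧ (∀ i ≠ j, x i ∈ s i) ∧ eval x f = 0 := by
  set σ := Equiv.swap 0 j
  have hsupp : ∀ {a}, a ∈ f.support → a.equivMapDomain σ ∈ (rename σ f).support := by
    intro a ha
    rwa [mem_support_iff, Finsupp.equivMapDomain_eq_mapDomain,
      coeff_rename_mapDomain _ σ.injective, ← mem_support_iff]
  obtain ⟨z, hz, w, hw, hroot⟩ := exists_eval_cons_eq_zero_of_mem_support (hsupp hd) (hsupp he)
    (by simpa [σ, Equiv.swap_apply_left] using hde) (s := fun i => s (σ i.succ))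
    (fun i => hs _ (by simp [σ, Equiv.swap_apply_eq_iff]))
  refine ⟨Fin.cons z w ∘ σ, by simpa [σ] using hz, fun i hi => ?_, by rwa [← eval_rename]⟩
  have hσi : σ i ≠ 0 := by simpa [σ, Equiv.swap_apply_eq_iff] using hi
  obtain ⟨k, hk⟩ := Fin.exists_succ_eq.mpr hσi
  have hwk : w k ∈ s (σ k.succ) := hw k trivial
  rwa [hk, Equiv.swap_apply_self, ← Fin.cons_succ (α := fun _ => K) z w, hk] at hwk

end MvPolynomial

theorem Set.Subsingleton.convexHull {𝕜 E : Type*} [Semiring 𝕜] [PartialOrder 𝕜]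
    [AddCommMonoid E] [Module 𝕜 E] {s : Set E} (hs : s.Subsingleton) :
    (convexHull 𝕜 s).Subsingleton := by
  obtain rfl | ⟨x, rfl⟩ := hs.eq_empty_or_singleton <;> simp

theorem Complex.infinite_setOf_lt_norm (r : ℝ) : {z : ℂ | r < ‖z‖}.Infinite := by
  refine ((Set.Ioi_infinite |r|).image Complex.ofReal_injective.injOn).mono ?_
  rintro _ ⟨t, ht, rfl⟩
  show r < ‖(t : ℂ)‖
  rw [Complex.norm_real, Real.norm_eq_abs]
  exact (le_abs_self r).trans_lt (ht.trans_le (le_abs_self t))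

theorem exists_mem_support_ne_of_nontrivial_newtonPolygon {f : MvPolynomial (Fin 2) ℂ}
    (h : (newtonPolygon f).Nontrivial) : ∃ d ∈ f.support, ∃ e ∈ f.support, d ≠ e := by
  by_contra! hf
  exact h.not_subsingleton ((Set.Subsingleton.image hf _).convexHull)

theorem mvEval_eq_eval (f : MvPolynomial (Fin 2) ℂ) (x : Fin 2 → ℂ) :
    mvEval f (x 0) (x 1) = MvPolynomial.eval x f := by
  rw [mvEval]
  congr
  ext i
  fin_cases i <;> rfl

theorem amoebaLog_mem_amoeba {f : MvPolynomial (Fin 2) ℂ} {x : Fin 2 → ℂ}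
    (hx : ∀ i, x i ≠ 0) (hfx : MvPolynomial.eval x f = 0) : amoebaLog (x 0, x 1) ∈ amoeba f :=
  ⟨(x 0, x 1), ⟨hx 0, hx 1, by rw [mvEval_eq_eval, hfx]⟩, rfl⟩

theorem abs_log_norm_le_norm_amoebaLog (x : Fin 2 → ℂ) (i : Fin 2) :
    |Real.log ‖x i‖| ≤ ‖amoebaLog (x 0, x 1)‖ := by
  rw [amoebaLog, Prod.norm_def, Real.norm_eq_abs, Real.norm_eq_abs]
  fin_cases i
  · exact le_max_left _ _
  · exact le_max_right _ _

theorem amoeba_unbounded_general (f : MvPolynomial (Fin 2) ℂ)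
    (hΔ : ∃ p ∈ newtonPolygon f, ∃ q ∈ newtonPolygon f, p ≠ q) :
    ¬ Bornology.IsBounded (amoeba f) := by
  obtain ⟨d, hd, e, he, hde⟩ := exists_mem_support_ne_of_nontrivial_newtonPolygon hΔ
  obtain ⟨j, hj⟩ := DFunLike.ne_iff.mp hde
  obtain ⟨i, hij⟩ := exists_ne j
  intro hbdd
  obtain ⟨C, hC⟩ := isBounded_iff_forall_norm_le.mp hbdd
  obtain ⟨x, hxj, hxs, hfx⟩ := MvPolynomial.exists_eval_eq_zero_of_mem_support hd he hj
    (s := fun _ => {z : ℂ | Real.exp C < ‖z‖}) fun _ _ => Complex.infinite_setOf_lt_norm _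
  have hx : ∀ k, x k ≠ 0 := fun k => by
    rcases eq_or_ne k j with rfl | hkj
    · exact hxj
    · exact norm_pos_iff.mp ((Real.exp_pos C).trans (hxs k hkj))
  have hlog : C < Real.log ‖x i‖ :=
    (Real.lt_log_iff_exp_lt ((Real.exp_pos C).trans (hxs i hij))).mpr (hxs i hij)
  linarith [le_abs_self (Real.log ‖x i‖), abs_log_norm_le_norm_amoebaLog x i,
    hC _ (amoebaLog_mem_amoeba hx hfx)]

/-- If the Newton polygon of a nonzero polynomial contains more than one
point, then its amoeba is unbounded. -/
theorem amoeba_unbounded (f : MvPolynomial (Fin 2) ℂ) (hf : f ≠ 0)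
    (hΔ : ∃ p ∈ newtonPolygon f, ∃ q ∈ newtonPolygon f, p ≠ q) :
    ¬ Bornology.IsBounded (amoeba f) :=
  amoeba_unbounded_general f hΔ
end

section
/- For nonzero polynomials g and h in two complex variables, the Newton polygon of the product g·h is the Minkowski sum of the Newton polygons of the factors: Δ_{g·h} = Δ_g + Δ_h. -/
open MeasureTheory Pointwise

/-!
A vertex of the Minkowski sum `Δ_g + Δ_h` has exactly one decomposition as a sum of an
exponent of `g` and an exponent of `h`, so the corresponding coefficient of `g * h` is a single
product of nonzero coefficients and does not cancel. Hence every vertex of `Δ_g + Δ_h` lies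
in `Δ_{gh}`, and since a polytope is the convex hull of its vertices,
`Δ_g + Δ_h ⊆ Δ_{gh}`. The reverse inclusion holds because every exponent of `g * h` is a sum
of an exponent of `g` and an exponent of `h`.
-/

open Set

theorem uniqueAdd_of_add_mem_extremePoints {𝕜 E : Type*} [Field 𝕜] [LinearOrder 𝕜]
    [IsStrictOrderedRing 𝕜] [AddCommGroup E] [Module 𝕜 E] {A B : Finset E} {a₀ b₀ : E}
    (ha₀ : a₀ ∈ A) (hb₀ : b₀ ∈ B)
    (hext : a₀ + b₀ ∈ extremePoints 𝕜 ((A : Set E) + (B : Set E))) :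
    UniqueAdd A B a₀ b₀ := by
  intro a b ha hb hab
  have hmid : a₀ + b₀ ∈ segment 𝕜 (a + b₀) (a₀ + b) := by
    refine ⟨1 / 2, 1 / 2, by norm_num, by norm_num, by norm_num, ?_⟩
    calc (1 / 2 : 𝕜) • (a + b₀) + (1 / 2 : 𝕜) • (a₀ + b)
        = (1 / 2 : 𝕜) • ((a + b) + (a₀ + b₀)) := by module
      _ = a₀ + b₀ := by rw [hab]; module
  rcases (mem_extremePoints_iff_forall_segment.1 hext).2 _ (add_mem_add ha hb₀) _
    (add_mem_add ha₀ hb) hmid with h | h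
  · have ha' : a = a₀ := add_right_cancel h
    exact ⟨ha', add_left_cancel (ha' ▸ hab)⟩
  · have hb' : b = b₀ := add_left_cancel h
    exact ⟨add_right_cancel (hb' ▸ hab), hb'⟩

theorem Set.Finite.convexHull_extremePoints_convexHull {E : Type*} [AddCommGroup E] [Module ℝ E]
    [TopologicalSpace E] [T2Space E] [IsTopologicalAddGroup E] [ContinuousSMul ℝ E]
    [LocallyConvexSpace ℝ E] {s : Set E} (hs : s.Finite) :
    convexHull ℝ ((convexHull ℝ s).extremePoints ℝ) = convexHull ℝ s := by
  have hclosed : IsClosed (convexHull ℝ ((convexHull ℝ s).extremePoints ℝ)) :=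
    (hs.subset extremePoints_convexHull_subset).isClosed_convexHull ℝ
  rw [← hclosed.closure_eq]
  exact closure_convexHull_extremePoints (hs.isCompact_convexHull ℝ) (convex_convexHull ℝ s)

namespace MvPolynomial

variable {σ R : Type*} [CommSemiring R]

theorem add_mem_support_mul_of_uniqueAdd [NoZeroDivisors R] {p q : MvPolynomial σ R}
    {a b : σ →₀ ℕ} (ha : a ∈ p.support) (hb : b ∈ q.support)
    (huniq : UniqueAdd p.support q.support a b) : a + b ∈ (p * q).support := by
  rw [mem_support_iff] at ha hb ⊢
  rw [coeff, AddMonoidAlgebra.coeff_mul_add_of_uniqueAdd huniq]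
  exact mul_ne_zero ha hb

variable {E : Type*} [AddCommGroup E] [Module ℝ E]

theorem extremePoints_convexHull_add_subset_image_support_mul [NoZeroDivisors R]
    (φ : (σ →₀ ℕ) →+ E) (hφ : Function.Injective φ) (p q : MvPolynomial σ R) :
    (convexHull ℝ (φ '' p.support + φ '' q.support)).extremePoints ℝ ⊆
      φ '' (p * q).support := by
  classical
  intro x hx
  have hx' : x ∈ (φ '' p.support + φ '' q.support).extremePoints ℝ :=
    inter_extremePoints_subset_extremePoints_of_subset (subset_convexHull ℝ _)
      ⟨extremePoints_convexHull_subset hx, hx⟩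
  obtain ⟨_, ⟨a, ha, rfl⟩, _, ⟨b, hb, rfl⟩, rfl⟩ := hx'.1
  have huniq : UniqueAdd (p.support.image φ) (q.support.image φ) (φ a) (φ b) := by
    refine uniqueAdd_of_add_mem_extremePoints (𝕜 := ℝ) (Finset.mem_image_of_mem φ ha)
      (Finset.mem_image_of_mem φ hb) ?_
    rwa [Finset.coe_image, Finset.coe_image]
  refine ⟨a + b, add_mem_support_mul_of_uniqueAdd ha hb ?_, map_add φ a b⟩
  exact (UniqueAdd.addHom_image_iff φ.toAddHom hφ).1 huniq

theorem convexHull_image_support_mul [NoZeroDivisors R] [TopologicalSpace E] [T2Space E]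
    [IsTopologicalAddGroup E] [ContinuousSMul ℝ E] [LocallyConvexSpace ℝ E]
    (φ : (σ →₀ ℕ) →+ E) (hφ : Function.Injective φ) (p q : MvPolynomial σ R) :
    convexHull ℝ (φ '' (p * q).support) =
      convexHull ℝ (φ '' p.support) + convexHull ℝ (φ '' q.support) := by
  classical
  rw [← convexHull_add]
  refine (convexHull_mono ?_).antisymm ?_
  · rw [← image_add φ, ← Finset.coe_add]
    exact image_mono (support_mul p q)
  · have hfin : (φ '' p.support + φ '' q.support).Finite :=
      (p.support.finite_toSet.image φ).add (q.support.finite_toSet.image φ)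
    rw [← hfin.convexHull_extremePoints_convexHull]
    exact convexHull_mono (extremePoints_convexHull_add_subset_image_support_mul φ hφ p q)

end MvPolynomial

def exponentVector : (Fin 2 →₀ ℕ) →+ ℝ × ℝ where
  toFun d := ((d 0 : ℝ), (d 1 : ℝ))
  map_zero' := by simp
  map_add' d e := by simp

theorem exponentVector_injective : Function.Injective exponentVector := by
  intro d e hde
  simp only [exponentVector, AddMonoidHom.coe_mk, ZeroHom.coe_mk, Prod.mk.injEq,
    Nat.cast_inj] at hde
  ext i
  fin_cases i
  exacts [hde.1, hde.2]

theorem newtonPolygon_mul_general (g h : MvPolynomial (Fin 2) ℂ) :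
    newtonPolygon (g * h) = newtonPolygon g + newtonPolygon h :=
  MvPolynomial.convexHull_image_support_mul exponentVector exponentVector_injective g h

/-- The Newton polygon of a product is the Minkowski sum of the Newton
polygons of the factors. -/
theorem newtonPolygon_mul (g h : MvPolynomial (Fin 2) ℂ) (hg : g ≠ 0) (hh : h ≠ 0) :
    newtonPolygon (g * h) = newtonPolygon g + newtonPolygon h :=
  newtonPolygon_mul_general g h
end
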